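/- arXiv:2002.12755 — 2 statements merged into one kernel-verified Lean document; each statement's English description precedes it below -/
import Mathlib

section
/- Let D be a real random variable with continuous strictly increasing cdf F and finite mean, and let C : ℝ → ℝ be a differentiable convex function with 0 ≤ C'(g) < γ₁ for all g, where γ₁ > 0 and γ₂ ≥ 0 with γ₁ + γ₂ > 0. If g* minimizes L(g) = C(g) + γ₁·E[(D−g)⁺] + γ₂·E[(g−D)⁺] over ℝ and g* is in the interior of the support of D, then F(g*) = (γ₁ − C'(g*))/(γ₁ + γ₂). -/
/-!
On `[a, b]` the expected shortage `g ↦ E[(g - D)⁺]` increases by between `F a (b - a)` and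
`F b (b - a)`, so at a continuity point of the cdf `F` it is differentiable with derivative `F g`.
Since `(D - g)⁺ = (g - D)⁺ - (g - D)`, the expected surplus `E[(D - g)⁺]` has derivative `F g - 1`.
Hence `L' g* = C' g* - γ₁ (1 - F g*) + γ₂ F g*`, and this vanishes at the minimiser.
-/

open MeasureTheory Set Filter Topology

theorem hasDerivAt_of_le_sub_le {f F : ℝ → ℝ} {x : ℝ} (hF : ContinuousAt F x)
    (hbound : ∀ a b, a ≤ b → F a * (b - a) ≤ f b - f a ∧ f b - f a ≤ F b * (b - a)) :
    HasDerivAt f (F x) x := by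
  have hslope : ∀ y, y ≠ x → F (min x y) ≤ slope f x y ∧ slope f x y ≤ F (max x y) := by
    intro y hy
    rcases hy.lt_or_gt with hyx | hxy
    · obtain ⟨hlo, hhi⟩ := hbound y x hyx.le
      have hpos : 0 < x - y := sub_pos.mpr hyx
      rw [slope_comm, slope_def_field, min_eq_right hyx.le, max_eq_left hyx.le]
      exact ⟨(le_div_iff₀ hpos).mpr hlo, (div_le_iff₀ hpos).mpr hhi⟩
    · obtain ⟨hlo, hhi⟩ := hbound x y hxy.le
      have hpos : 0 < y - x := sub_pos.mpr hxy
      rw [slope_def_field, min_eq_left hxy.le, max_eq_right hxy.le]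
      exact ⟨(le_div_iff₀ hpos).mpr hlo, (div_le_iff₀ hpos).mpr hhi⟩
  have hlim : ∀ m : ℝ → ℝ, Continuous m → m x = x →
      Tendsto (fun y => F (m y)) (𝓝[≠] x) (𝓝 (F x)) := fun m hm hmx =>
    (hF.tendsto.comp (by simpa only [hmx] using hm.tendsto x)).mono_left nhdsWithin_le_nhds
  rw [hasDerivAt_iff_tendsto_slope]
  exact tendsto_of_tendsto_of_tendsto_of_le_of_le'
    (hlim _ (continuous_const.min continuous_id) (min_self x))
    (hlim _ (continuous_const.max continuous_id) (max_self x))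
    (eventually_nhdsWithin_of_forall fun y hy => (hslope y hy).1)
    (eventually_nhdsWithin_of_forall fun y hy => (hslope y hy).2)

section ExpectedShortfall

variable {μ : Measure ℝ} [IsFiniteMeasure μ]

theorem integrable_max_const_sub_zero (hμ : Integrable id μ) (g : ℝ) :
    Integrable (fun x => max (g - x) 0) μ :=
  ((integrable_const g).sub hμ).pos_part

theorem le_integral_max_const_sub_zero_sub (hμ : Integrable id μ) {a b : ℝ} (hab : a ≤ b) :
    μ.real (Iic a) * (b - a) ≤ (∫ x, max (b - x) 0 ∂μ) - ∫ x, max (a - x) 0 ∂μ := by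
  rw [← integral_sub (integrable_max_const_sub_zero hμ b) (integrable_max_const_sub_zero hμ a),
    ← smul_eq_mul, ← integral_indicator_const _ measurableSet_Iic]
  refine integral_mono ((integrable_const _).indicator measurableSet_Iic)
    ((integrable_max_const_sub_zero hμ b).sub (integrable_max_const_sub_zero hμ a)) fun x => ?_
  by_cases hx : x ≤ a
  · simp only [indicator_of_mem (mem_Iic.mpr hx), max_eq_left (sub_nonneg.mpr hx),
      max_eq_left (sub_nonneg.mpr (hx.trans hab))]
    linarith
  · simp only [indicator_of_notMem (notMem_Iic.mpr (not_le.mp hx)),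
      max_eq_right (sub_nonpos.mpr (not_le.mp hx).le), sub_zero]
    exact le_max_right _ _

theorem integral_max_const_sub_zero_sub_le (hμ : Integrable id μ) {a b : ℝ} (hab : a ≤ b) :
    (∫ x, max (b - x) 0 ∂μ) - ∫ x, max (a - x) 0 ∂μ ≤ μ.real (Iic b) * (b - a) := by
  rw [← integral_sub (integrable_max_const_sub_zero hμ b) (integrable_max_const_sub_zero hμ a),
    ← smul_eq_mul, ← integral_indicator_const _ measurableSet_Iic]
  refine integral_mono ((integrable_max_const_sub_zero hμ b).sub
    (integrable_max_const_sub_zero hμ a)) ((integrable_const _).indicator measurableSet_Iic)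
    fun x => ?_
  by_cases hx : x ≤ b
  · simp only [indicator_of_mem (mem_Iic.mpr hx), max_eq_left (sub_nonneg.mpr hx)]
    linarith [le_max_left (a - x) 0]
  · simp only [indicator_of_notMem (notMem_Iic.mpr (not_le.mp hx)),
      max_eq_right (sub_nonpos.mpr (not_le.mp hx).le),
      max_eq_right (sub_nonpos.mpr (hab.trans (not_le.mp hx).le)), sub_zero, le_refl]

theorem hasDerivAt_integral_max_const_sub_zero (hμ : Integrable id μ) {g : ℝ}
    (hcont : ContinuousAt (fun t => μ.real (Iic t)) g) :
    HasDerivAt (fun g => ∫ x, max (g - x) 0 ∂μ) (μ.real (Iic g)) g :=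
  hasDerivAt_of_le_sub_le hcont fun _ _ hab =>
    ⟨le_integral_max_const_sub_zero_sub hμ hab, integral_max_const_sub_zero_sub_le hμ hab⟩

end ExpectedShortfall

theorem hasDerivAt_integral_max_sub_const_zero {μ : Measure ℝ} [IsProbabilityMeasure μ]
    (hμ : Integrable id μ) {g : ℝ} (hcont : ContinuousAt (fun t => μ.real (Iic t)) g) :
    HasDerivAt (fun g => ∫ x, max (x - g) 0 ∂μ) (μ.real (Iic g) - 1) g := by
  have hsplit : (fun g => ∫ x, max (x - g) 0 ∂μ)
      = fun g => (∫ x, max (g - x) 0 ∂μ) - (g - ∫ x, x ∂μ) := by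
    funext g
    have hpt : (fun x => max (x - g) 0) = fun x => max (g - x) 0 - (g - x) := by
      funext x
      rcases le_total x g with h | h <;> simp [h]
    have hlin : Integrable (fun x => g - x) μ := (integrable_const g).sub hμ
    rw [hpt, integral_sub (integrable_max_const_sub_zero hμ g) hlin,
      integral_sub (f := fun _ => g) (g := fun x => x) (integrable_const g) hμ, integral_const,
      probReal_univ, one_smul]
  rw [hsplit]
  exact (hasDerivAt_integral_max_const_sub_zero hμ hcont).sub
    ((hasDerivAt_id' g).sub_const (∫ x, x ∂μ))

theorem newsvendor_optimality_general
    (μ : Measure ℝ) [IsProbabilityMeasure μ] (hmean : Integrable id μ)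
    (F : ℝ → ℝ) (hF : ∀ x, F x = (μ (Iic x)).toReal)
    (hFcont : Continuous F)
    (C : ℝ → ℝ) (hCdiff : Differentiable ℝ C)
    (γ₁ γ₂ : ℝ) (hγ : 0 < γ₁ + γ₂)
    (L : ℝ → ℝ)
    (hL : ∀ g, L g = C g + γ₁ * ∫ x, max (x - g) 0 ∂μ
                          + γ₂ * ∫ x, max (g - x) 0 ∂μ)
    (gstar : ℝ) (hmin : IsMinOn L Set.univ gstar) :
    F gstar = (γ₁ - deriv C gstar) / (γ₁ + γ₂) := by
  have hcdf : (fun t => μ.real (Iic t)) = F := funext fun t => (hF t).symm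
  have hcont : ContinuousAt (fun t => μ.real (Iic t)) gstar := hcdf ▸ hFcont.continuousAt
  have hL' : L = fun g => C g + γ₁ * (∫ x, max (x - g) 0 ∂μ) + γ₂ * ∫ x, max (g - x) 0 ∂μ :=
    funext hL
  have hderiv : HasDerivAt L (deriv C gstar + γ₁ * (F gstar - 1) + γ₂ * F gstar) gstar := by
    rw [hL', ← congrFun hcdf gstar]
    exact ((hCdiff gstar).hasDerivAt.add
      ((hasDerivAt_integral_max_sub_const_zero hmean hcont).const_mul γ₁)).add
      ((hasDerivAt_integral_max_const_sub_zero hmean hcont).const_mul γ₂)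
  have hzero := (hmin.isLocalMin Filter.univ_mem).hasDerivAt_eq_zero hderiv
  rw [eq_div_iff hγ.ne']
  linarith

/-- first-order (newsvendor-type) optimality condition:
at an interior minimizer `g*`, `F g* = (γ₁ − C'(g*))/(γ₁ + γ₂)`. -/
theorem newsvendor_optimality
    (μ : Measure ℝ) [IsProbabilityMeasure μ] (hmean : Integrable id μ)
    (F : ℝ → ℝ) (hF : ∀ x, F x = (μ (Iic x)).toReal)
    (hFcont : Continuous F) (hFmono : StrictMono F)
    (C : ℝ → ℝ) (hCdiff : Differentiable ℝ C) (hCconv : ConvexOn ℝ Set.univ C)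
    (γ₁ γ₂ : ℝ) (hγ₁ : 0 < γ₁) (hγ₂ : 0 ≤ γ₂) (hγ : 0 < γ₁ + γ₂)
    (hC' : ∀ g, 0 ≤ deriv C g ∧ deriv C g < γ₁)
    (L : ℝ → ℝ)
    (hL : ∀ g, L g = C g + γ₁ * ∫ x, max (x - g) 0 ∂μ
                          + γ₂ * ∫ x, max (g - x) 0 ∂μ)
    (gstar : ℝ) (hmin : IsMinOn L Set.univ gstar)
    (hsupp : gstar ∈ interior {x | 0 < F x ∧ F x < 1}) :
    F gstar = (γ₁ - deriv C gstar) / (γ₁ + γ₂) :=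
  newsvendor_optimality_general μ hmean F hF hFcont C hCdiff γ₁ γ₂ hγ L hL gstar hmin
end

section
/- Let D be an integrable random variable with continuous cdf H, C : ℝ → ℝ convex differentiable, γ₁, γ₂ ≥ 0, L(g) = C(g) + γ₁·E[(D−g)⁺] + γ₂·E[(g−D)⁺], and let g_min ≤ g_max be reals. Suppose there exists g₀ ∈ ℝ with (γ₁+γ₂)·H(g₀) − γ₁ + C'(g₀) = 0 and that L'(x) = (γ₁+γ₂)·H(x) − γ₁ + C'(x) is strictly increasing. Then the unique minimizer of L over [g_min, g_max] equals med{g_min, g₀, g_max}, the median of the three values. -/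
open MeasureTheory Set

/-- the constrained optimal dispatch is the unconstrained first-order
solution clipped to `[g_min, g_max]` (the median of the three values). -/
theorem clipped_minimizer
    (μ : Measure ℝ) [IsProbabilityMeasure μ] (hmean : Integrable id μ)
    (H : ℝ → ℝ) (hH : ∀ x, H x = (μ (Iic x)).toReal) (hHcont : Continuous H)
    (C : ℝ → ℝ) (hCconv : ConvexOn ℝ Set.univ C) (hCdiff : Differentiable ℝ C)
    (γ₁ γ₂ : ℝ) (hγ₁ : 0 ≤ γ₁) (hγ₂ : 0 ≤ γ₂)
    (L : ℝ → ℝ)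
    (hL : ∀ g, L g = C g + γ₁ * ∫ x, max (x - g) 0 ∂μ
                          + γ₂ * ∫ x, max (g - x) 0 ∂μ)
    (hL' : ∀ x, HasDerivAt L ((γ₁ + γ₂) * H x - γ₁ + deriv C x) x)
    (hstrict : StrictMono (fun x => (γ₁ + γ₂) * H x - γ₁ + deriv C x))
    (gmin gmax : ℝ) (hg : gmin ≤ gmax)
    (g₀ : ℝ) (hfoc : (γ₁ + γ₂) * H g₀ - γ₁ + deriv C g₀ = 0) :
    IsMinOn L (Icc gmin gmax) (max gmin (min g₀ gmax)) ∧
    ∀ g ∈ Icc gmin gmax, IsMinOn L (Icc gmin gmax) g → g = max gmin (min g₀ gmax) := by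
  set f : ℝ → ℝ := fun x => (γ₁ + γ₂) * H x - γ₁ + deriv C x with hf
  have hderiv : ∀ x, deriv L x = f x := fun x => (hL' x).deriv
  have hLcont : Continuous L :=
    (Differentiable.continuous (fun x => (hL' x).differentiableAt))
  have hf0 : f g₀ = 0 := hfoc
  set m : ℝ := max gmin (min g₀ gmax) with hm
  have hmmem : m ∈ Icc gmin gmax := by
    constructor
    · exact le_max_left _ _
    · exact max_le hg (min_le_right _ _)
  -- key: strict inequality off m
  have key : ∀ g ∈ Icc gmin gmax, g ≠ m → L m < L g := by
    intro g hgm hne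
    rcases lt_or_gt_of_ne hne with hlt | hgt
    · -- g < m, then m ≤ g₀, L strictly decreasing on [g, m]
      have hmle : m ≤ g₀ := by
        have : gmin < m := lt_of_le_of_lt hgm.1 hlt
        have : m = min g₀ gmax := by
          rcases max_choice gmin (min g₀ gmax) with h | h
          · rw [hm, h] at this; exact absurd this (lt_irrefl _)
          · exact h
        rw [this]; exact min_le_left _ _
      have hanti : StrictAntiOn L (Icc g m) := by
        apply StrictAntiOn.mono (s := Icc g m) ?_ (le_refl _)
        apply strictAntiOn_of_deriv_neg (convex_Icc g m) hLcont.continuousOn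
        intro x hx
        rw [interior_Icc] at hx
        rw [hderiv]
        have : f x < f g₀ := hstrict (lt_of_lt_of_le hx.2 hmle)
        rw [hf0] at this; exact this
      exact hanti (left_mem_Icc.2 hlt.le) (right_mem_Icc.2 hlt.le) hlt
    · -- m < g, then g₀ ≤ m, L strictly increasing on [m, g]
      have hmge : g₀ ≤ m := by
        have hmlt : m < gmax := lt_of_lt_of_le hgt hgm.2
        have h1 : min g₀ gmax ≤ m := le_max_right _ _
        rcases le_or_gt g₀ gmax with hle | hgt2
        · calc g₀ = min g₀ gmax := (min_eq_left hle).symm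
            _ ≤ m := h1
        · rw [min_eq_right hgt2.le] at h1
          exact absurd hmlt (not_lt.2 h1)
      have hmono : StrictMonoOn L (Icc m g) := by
        apply strictMonoOn_of_deriv_pos (convex_Icc m g) hLcont.continuousOn
        intro x hx
        rw [interior_Icc] at hx
        rw [hderiv]
        have : f g₀ < f x := hstrict (lt_of_le_of_lt hmge hx.1)
        rw [hf0] at this; exact this
      exact hmono (left_mem_Icc.2 hgt.le) (right_mem_Icc.2 hgt.le) hgt
  constructor
  · intro g hgm
    by_cases hne : g = m
    · simp [hne]
    · exact (key g hgm hne).le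
  · intro g hgm hmin
    by_contra hne
    have h1 := key g hgm hne
    have h2 := hmin hmmem
    simp only [Set.mem_setOf_eq] at h2
    exact absurd h2 (not_le.2 h1)
end
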